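/- The 4×4 real symmetric matrix X with rows (346, 84, −16, −98), (84, 240, 77, 156), (−16, 77, 30, 70), (−98, 156, 70, 170) has all of its 2×2 principal submatrices positive semidefinite, and X has exactly two negative eigenvalues. -/

import Mathlib

/-- A real symmetric `2 × 2` matrix with nonnegative diagonal entries and
nonnegative determinant is positive semidefinite. -/
lemma psd2_aux {a b c : ℝ} (ha : 0 ≤ a) (hc : 0 ≤ c) (hd : 0 ≤ a * c - b * b) :
    (!![a, b; b, c]).PosSemidef := by
  rw [Matrix.posSemidef_iff_dotProduct_mulVec]
  constructor
  · ext i j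
    fin_cases i <;> fin_cases j <;> simp [Matrix.conjTranspose_apply]
  · intro x
    have hs : star x = x := by ext i; simp
    rw [hs]
    simp [dotProduct, Matrix.mulVec, Fin.sum_univ_two]
    rcases ha.eq_or_lt with h0 | hpos
    · have hb : b = 0 := by nlinarith [sq_nonneg b]
      have he : x 0 * (a * x 0 + b * x 1) + x 1 * (b * x 0 + c * x 1) = c * (x 1 * x 1) := by
        rw [hb, ← h0]; ring
      rw [he]
      exact mul_nonneg hc (mul_self_nonneg (x 1))
    · nlinarith [sq_nonneg (a * x 0 + b * x 1), mul_nonneg hd (sq_nonneg (x 1))]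

open Classical in
/-- `X` is `k`-locally PSD: every `k × k` principal submatrix of `X` is positive semidefinite. -/
def LocallyPSD {ι : Type} [Fintype ι] (k : ℕ) (X : Matrix ι ι ℝ) : Prop :=
  ∀ S : Finset ι, S.card = k →
    (X.submatrix (fun i : S => (i : ι)) (fun i : S => (i : ι))).PosSemidef

/-- The explicit `4 × 4` symmetric matrix is `2`-locally PSD and has exactly two negative
eigenvalues (counted with multiplicity). -/
theorem explicit_matrix_two_negative_eigenvalues :
    LocallyPSD 2 (!![(346:ℝ), 84, -16, -98; 84, 240, 77, 156; -16, 77, 30, 70;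
        -98, 156, 70, 170]) ∧
    ∃ hX : (!![(346:ℝ), 84, -16, -98; 84, 240, 77, 156; -16, 77, 30, 70;
        -98, 156, 70, 170]).IsHermitian,
      ({i : Fin 4 | hX.eigenvalues i < 0} : Set (Fin 4)).ncard = 2 := by
  set X : Matrix (Fin 4) (Fin 4) ℝ :=
    !![(346:ℝ), 84, -16, -98; 84, 240, 77, 156; -16, 77, 30, 70; -98, 156, 70, 170] with hXdef
  constructor
  · -- `2`-locally PSD
    have key : ∀ i j : Fin 4, (!![X i i, X i j; X j i, X j j]).PosSemidef := by
      intro i j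
      fin_cases i <;> fin_cases j <;> simp only [hXdef] <;>
        norm_num [Matrix.cons_val_zero, Matrix.cons_val_one, Matrix.head_cons] <;>
        exact psd2_aux (by norm_num) (by norm_num) (by norm_num)
    intro S hS
    let e : Fin 2 ≃ S := (S.equivFinOfCardEq hS).symm
    have h2 : (X.submatrix (fun k : Fin 2 => ((e k : S) : Fin 4))
        (fun k : Fin 2 => ((e k : S) : Fin 4))).PosSemidef := by
      have hM : X.submatrix (fun k : Fin 2 => ((e k : S) : Fin 4))
          (fun k : Fin 2 => ((e k : S) : Fin 4))
          = !![X (e 0) (e 0), X (e 0) (e 1); X (e 1) (e 0), X (e 1) (e 1)] := by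
        ext p q
        fin_cases p <;> fin_cases q <;> simp [Matrix.submatrix_apply]
      rw [hM]
      exact key _ _
    have h3 := h2.submatrix (fun s : S => e.symm s)
    have h4 : X.submatrix (fun i : S => (i : Fin 4)) (fun i : S => (i : Fin 4))
        = (X.submatrix (fun k : Fin 2 => ((e k : S) : Fin 4))
            (fun k : Fin 2 => ((e k : S) : Fin 4))).submatrix
          (fun s : S => e.symm s) (fun s : S => e.symm s) := by
      ext a b
      simp [Matrix.submatrix_apply]
    rw [h4]
    exact h3
  · -- exactly two negative eigenvalues
    have hX : X.IsHermitian := by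
      unfold Matrix.IsHermitian
      ext i j
      fin_cases i <;> fin_cases j <;> simp [hXdef, Matrix.conjTranspose_apply]
    refine ⟨hX, ?_⟩
    classical
    set lam : Fin 4 → ℝ := hX.eigenvalues with hlam
    have hdet : X.det = 156800 := by
      rw [hXdef]
      simp [Matrix.det_succ_row_zero, Fin.sum_univ_succ, Fin.succAbove]
      norm_num
    have hprod : ∏ i, lam i = 156800 := by
      have h := hX.det_eq_prod_eigenvalues
      rw [hdet] at h
      exact_mod_cast h.symm
    have htraceX : X.trace = 786 := by
      norm_num [hXdef, Matrix.trace, Fin.sum_univ_four, Matrix.cons_val_two, Matrix.cons_val_three]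
    have hsum : ∑ i, lam i = 786 := by
      have h1 : X.trace = (Matrix.diagonal (RCLike.ofReal ∘ hX.eigenvalues) :
          Matrix (Fin 4) (Fin 4) ℝ).trace := by
        conv_lhs => rw [hX.spectral_theorem]
        rw [Unitary.conjStarAlgAut_apply]
        rw [Matrix.trace_mul_cycle]
        rw [Unitary.coe_star_mul_self]
        rw [Matrix.one_mul]
      rw [htraceX] at h1
      have h2 : (Matrix.diagonal (RCLike.ofReal ∘ hX.eigenvalues) :
          Matrix (Fin 4) (Fin 4) ℝ).trace = ∑ i, lam i := by
        simp [Matrix.trace_diagonal, hlam]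
      rw [h2] at h1
      exact h1.symm
    have hne : ∀ i, lam i ≠ 0 := by
      intro i hi
      rw [Finset.prod_eq_zero (Finset.mem_univ i) hi] at hprod
      norm_num at hprod
    set N : Finset (Fin 4) := Finset.univ.filter (fun i => lam i < 0) with hN
    have hset : {i : Fin 4 | lam i < 0} = ↑N := by ext i; simp [hN]
    rw [hset, Set.ncard_coe_finset]
    have hmemN : ∀ i, i ∈ N ↔ lam i < 0 := by intro i; simp [hN]
    have hposC : ∀ i ∈ Finset.univ.filter (fun i => ¬ lam i < 0), 0 < lam i := by
      intro i hi
      rw [Finset.mem_filter] at hi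
      exact lt_of_le_of_ne (not_lt.mp hi.2) (Ne.symm (hne i))
    have hprodC : 0 < ∏ i ∈ Finset.univ.filter (fun i => ¬ lam i < 0), lam i :=
      Finset.prod_pos hposC
    have hsplit : (∏ i ∈ N, lam i) * (∏ i ∈ Finset.univ.filter (fun i => ¬ lam i < 0), lam i)
        = 156800 := by
      rw [hN, Finset.prod_filter_mul_prod_filter_not]
      exact hprod
    have heven : Even N.card := by
      by_contra hodd
      have hodd' : Odd N.card := Nat.not_even_iff_odd.mp hodd
      have h1 : ∏ i ∈ N, lam i = (-1 : ℝ) ^ N.card * ∏ i ∈ N, (-lam i) := by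
        rw [← Finset.prod_const, ← Finset.prod_mul_distrib]
        apply Finset.prod_congr rfl
        intro i _
        ring
      have h2 : 0 < ∏ i ∈ N, (-lam i) := by
        apply Finset.prod_pos
        intro i hi
        have := (hmemN i).mp hi
        linarith
      rw [hodd'.neg_one_pow] at h1
      nlinarith
    have hle : N.card ≤ 4 := by
      have := Finset.card_le_univ N
      simpa using this
    have hcases : N.card = 0 ∨ N.card = 2 ∨ N.card = 4 := by
      rcases heven with ⟨k, hk⟩
      omega
    rcases hcases with h0 | h2 | h4
    · -- all eigenvalues nonnegative : X would be PSD, contradicting the test vector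
      exfalso
      have hNempty : N = ∅ := Finset.card_eq_zero.mp h0
      have hnonneg : ∀ i, 0 ≤ lam i := by
        intro i
        by_contra hneg
        have : i ∈ N := (hmemN i).mpr (not_le.mp hneg)
        rw [hNempty] at this
        exact absurd this (Finset.notMem_empty i)
      have hpsd : X.PosSemidef := hX.posSemidef_iff_eigenvalues_nonneg.mpr hnonneg
      have hq := hpsd.dotProduct_mulVec_nonneg ![3, -5, 1, 5]
      have hstar : star (![3, -5, 1, 5] : Fin 4 → ℝ) = ![3, -5, 1, 5] := by ext i; simp
      rw [hstar] at hq
      norm_num [hXdef, dotProduct, Matrix.mulVec, Fin.sum_univ_four, Matrix.cons_val_two,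
        Matrix.cons_val_three] at hq
    · exact h2
    · -- all eigenvalues negative : contradicts the positive trace
      exfalso
      have hNuniv : N = Finset.univ := Finset.eq_univ_of_card N (by simp [h4])
      have hneg : ∀ i ∈ (Finset.univ : Finset (Fin 4)), lam i < (fun _ => (0:ℝ)) i := by
        intro i _
        exact (hmemN i).mp (hNuniv ▸ Finset.mem_univ i)
      have := Finset.sum_lt_sum_of_nonempty Finset.univ_nonempty hneg
      rw [hsum] at this
      simp at this
      linarith
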